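/- Let π = ⟨x, y | xyx = yxy⟩ be the trefoil knot group. Then π is not isomorphic to the infinite cyclic group ℤ. -/
import Mathlib


/-- The single relator `xyx(yxy)⁻¹` of the trefoil knot group presentation
`⟨x, y | xyx = yxy⟩`, in the free group on the two generators `0` and `1`. -/
def trefoilRels : Set (FreeGroup (Fin 2)) :=
  {FreeGroup.of 0 * FreeGroup.of 1 * FreeGroup.of 0 *
    (FreeGroup.of 1 * FreeGroup.of 0 * FreeGroup.of 1)⁻¹}

/-- The trefoil knot group `π = ⟨x, y | xyx = yxy⟩`. -/
abbrev TrefoilGroup : Type := PresentedGroup trefoilRels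

/-- The generator `x` of the trefoil knot group. -/
def trefoilX : TrefoilGroup := PresentedGroup.of 0

/-- The generator `y` of the trefoil knot group. -/
def trefoilY : TrefoilGroup := PresentedGroup.of 1

private def trefoilF : Fin 2 → Equiv.Perm (Fin 3) :=
  ![Equiv.swap 0 1, Equiv.swap 1 2]

private lemma trefoil_rel_holds : ∀ r ∈ trefoilRels,
    FreeGroup.lift trefoilF r = 1 := by
  intro r hr
  rw [trefoilRels, Set.mem_singleton_iff] at hr
  subst hr
  simp only [map_mul, map_inv, FreeGroup.lift_apply_of, trefoilF]
  decide

private def trefoilToPerm : TrefoilGroup →* Equiv.Perm (Fin 3) :=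
  PresentedGroup.toGroup trefoil_rel_holds

/-- The trefoil knot group `π = ⟨x, y | xyx = yxy⟩` is not isomorphic to the
infinite cyclic group `ℤ`. -/
theorem trefoil_not_infinite_cyclic :
    ¬ Nonempty (TrefoilGroup ≃* Multiplicative ℤ) := by
  rintro ⟨e⟩
  have comm : trefoilX * trefoilY = trefoilY * trefoilX := by
    apply e.injective
    rw [map_mul, map_mul, mul_comm]
  have := congrArg trefoilToPerm comm
  rw [map_mul, map_mul] at this
  have hx : trefoilToPerm trefoilX = Equiv.swap 0 1 :=
    PresentedGroup.toGroup.of trefoil_rel_holds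
  have hy : trefoilToPerm trefoilY = Equiv.swap 1 2 :=
    PresentedGroup.toGroup.of trefoil_rel_holds
  rw [hx, hy] at this
  exact absurd this (by decide)
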